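/- arXiv:1712.03807 — 3 statements merged into one kernel-verified Lean document; each statement's English description precedes it below -/
import Mathlib

section
/- Let J ⊆ ℝ be an open interval and let B̃ : J → ℝ^{d×d} and ã : J → ℝ^{d×d} be continuous. Suppose L̃ : J → ℝ^{m×d} is differentiable with L̃′(t) = −L̃(t) B̃(t) for all t ∈ J, suppose M̃† : J → ℝ^{m×m} is differentiable with (M̃†)′(t) = −L̃(t) ã(t) L̃(t)ᵀ for all t ∈ J, and suppose M̃†(t) is invertible for every t ∈ J; write M̃(t) := M̃†(t)⁻¹ and H̃(t) := L̃(t)ᵀ M̃(t) L̃(t). Then H̃ is differentiable on J with H̃′(t) = −B̃(t)ᵀ H̃(t) − H̃(t) B̃(t) + H̃(t) ã(t) H̃(t) for every t ∈ J. -/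
/-!
`H̃ = L̃ᵀ M̃ L̃` is a product of three differentiable matrix functions, and `M̃ = (M̃†)⁻¹` has
derivative `-M̃ (M̃†)′ M̃ = M̃ L̃ ã L̃ᵀ M̃`, the Fréchet derivative of inversion in the normed
algebra of square matrices. The Leibniz rule then gives
`H̃′ = -B̃ᵀ L̃ᵀ M̃ L̃ + L̃ᵀ M̃ L̃ ã L̃ᵀ M̃ L̃ - L̃ᵀ M̃ L̃ B̃`.
-/

open Matrix

variable {𝕜 : Type*} [NontriviallyNormedField 𝕜] {ι κ ν : Type*}

def HasEntrywiseDerivAt (A : 𝕜 → Matrix ι κ 𝕜) (A' : Matrix ι κ 𝕜) (t : 𝕜) : Prop :=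
  ∀ i j, HasDerivAt (fun s => A s i j) (A' i j) t

namespace HasEntrywiseDerivAt

variable {t : 𝕜}

theorem transpose {A : 𝕜 → Matrix ι κ 𝕜} {A' : Matrix ι κ 𝕜} (h : HasEntrywiseDerivAt A A' t) :
    HasEntrywiseDerivAt (fun s => (A s)ᵀ) A'ᵀ t :=
  fun i j => h j i

theorem mul [Fintype κ] {A : 𝕜 → Matrix ι κ 𝕜} {B : 𝕜 → Matrix κ ν 𝕜} {A' : Matrix ι κ 𝕜}
    {B' : Matrix κ ν 𝕜} (hA : HasEntrywiseDerivAt A A' t) (hB : HasEntrywiseDerivAt B B' t) :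
    HasEntrywiseDerivAt (fun s => A s * B s) (A' * B t + A t * B') t := by
  intro i j
  simpa [Matrix.mul_apply, Finset.sum_add_distrib] using
    HasDerivAt.fun_sum fun k _ => (hA i k).mul (hB k j)

theorem transpose_mul_mul [Fintype ι] {L : 𝕜 → Matrix ι κ 𝕜}
    {N : 𝕜 → Matrix ι ι 𝕜} {L' : Matrix ι κ 𝕜} {N' : Matrix ι ι 𝕜}
    (hL : HasEntrywiseDerivAt L L' t) (hN : HasEntrywiseDerivAt N N' t) :
    HasEntrywiseDerivAt (fun s => (L s)ᵀ * N s * L s)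
      (L'ᵀ * N t * L t + (L t)ᵀ * N' * L t + (L t)ᵀ * N t * L') t := by
  have h := (hL.transpose.mul hN).mul hL
  rwa [Matrix.add_mul] at h

section linftyOp

-- Any norm would do for `hasDerivAt_iff`; this one makes square matrices a normed algebra.
attribute [local instance] Matrix.linftyOpNormedAddCommGroup Matrix.linftyOpNormedSpace
  Matrix.linftyOpNormedRing Matrix.linftyOpNormedAlgebra

variable [CompleteSpace 𝕜] [Fintype ι] [Fintype κ]

theorem hasDerivAt_iff {A : 𝕜 → Matrix ι κ 𝕜} {A' : Matrix ι κ 𝕜} :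
    HasEntrywiseDerivAt A A' t ↔ HasDerivAt A A' t := by
  let e := (Matrix.ofLinearEquiv 𝕜 : (ι → κ → 𝕜) ≃ₗ[𝕜] Matrix ι κ 𝕜).toContinuousLinearEquiv
  have hpi : HasEntrywiseDerivAt A A' t ↔ HasDerivAt (fun s => e.symm (A s)) (e.symm A') t := by
    simp only [HasEntrywiseDerivAt, hasDerivAt_pi]
    rfl
  rw [hpi]
  exact ⟨e.hasFDerivAt.comp_hasDerivAt t, e.symm.hasFDerivAt.comp_hasDerivAt t⟩

theorem inv [DecidableEq ι] {M : 𝕜 → Matrix ι ι 𝕜} {M' : Matrix ι ι 𝕜}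
    (hM : HasEntrywiseDerivAt M M' t) (hunit : IsUnit (M t)) :
    HasEntrywiseDerivAt (fun s => (M s)⁻¹) (-((M t)⁻¹ * M' * (M t)⁻¹)) t := by
  -- Completeness for this non-canonical norm is not found by instance search.
  have : HasSummableGeomSeries (Matrix ι ι 𝕜) :=
    @instHasSummableGeomSeriesOfCompleteSpace _ _ (FiniteDimensional.complete 𝕜 (Matrix ι ι 𝕜))
  obtain ⟨u, hu⟩ := hunit
  have hinv := (hu ▸ hasFDerivAt_ringInverse (𝕜 := 𝕜) u).comp_hasDerivAt t (hasDerivAt_iff.1 hM)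
  simp only [Function.comp_def, ← Matrix.nonsing_inv_eq_ringInverse] at hinv
  rw [hasDerivAt_iff]
  refine hinv.congr_deriv ?_
  rw [_root_.neg_apply, ContinuousLinearMap.mulLeftRight_apply, Matrix.coe_units_inv, hu]

end linftyOp

end HasEntrywiseDerivAt

theorem riccati_for_H_general {d m : ℕ} (a b : ℝ)
    (Btil atil : ℝ → Matrix (Fin d) (Fin d) ℝ)
    (Ltil : ℝ → Matrix (Fin m) (Fin d) ℝ)
    (hLtil : ∀ t ∈ Set.Ioo a b, ∀ i j,
      HasDerivAt (fun s => Ltil s i j) ((-(Ltil t * Btil t)) i j) t)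
    (Mdag : ℝ → Matrix (Fin m) (Fin m) ℝ)
    (hMdag : ∀ t ∈ Set.Ioo a b, ∀ i j,
      HasDerivAt (fun s => Mdag s i j) ((-(Ltil t * atil t * (Ltil t)ᵀ)) i j) t)
    (hMinv : ∀ t ∈ Set.Ioo a b, IsUnit (Mdag t)) :
    ∀ t ∈ Set.Ioo a b, ∀ i j,
      HasDerivAt (fun s => ((Ltil s)ᵀ * (Mdag s)⁻¹ * Ltil s) i j)
        ((-((Btil t)ᵀ * ((Ltil t)ᵀ * (Mdag t)⁻¹ * Ltil t)) -
            ((Ltil t)ᵀ * (Mdag t)⁻¹ * Ltil t) * Btil t +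
            ((Ltil t)ᵀ * (Mdag t)⁻¹ * Ltil t) * atil t *
              ((Ltil t)ᵀ * (Mdag t)⁻¹ * Ltil t)) i j) t := by
  intro t ht
  have hL : HasEntrywiseDerivAt Ltil (-(Ltil t * Btil t)) t := hLtil t ht
  have hM : HasEntrywiseDerivAt Mdag (-(Ltil t * atil t * (Ltil t)ᵀ)) t := hMdag t ht
  show HasEntrywiseDerivAt _ _ t
  convert hL.transpose_mul_mul (hM.inv (hMinv t ht)) using 1
  simp only [transpose_neg, transpose_mul, Matrix.neg_mul, Matrix.mul_neg, neg_neg,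
    Matrix.mul_assoc]
  abel

theorem riccati_for_H {d m : ℕ} (a b : ℝ)
    (Btil atil : ℝ → Matrix (Fin d) (Fin d) ℝ)
    (hB : ContinuousOn Btil (Set.Ioo a b)) (ha : ContinuousOn atil (Set.Ioo a b))
    (Ltil : ℝ → Matrix (Fin m) (Fin d) ℝ)
    (hLtil : ∀ t ∈ Set.Ioo a b, ∀ i j,
      HasDerivAt (fun s => Ltil s i j) ((-(Ltil t * Btil t)) i j) t)
    (Mdag : ℝ → Matrix (Fin m) (Fin m) ℝ)
    (hMdag : ∀ t ∈ Set.Ioo a b, ∀ i j,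
      HasDerivAt (fun s => Mdag s i j) ((-(Ltil t * atil t * (Ltil t)ᵀ)) i j) t)
    (hMinv : ∀ t ∈ Set.Ioo a b, IsUnit (Mdag t)) :
    ∀ t ∈ Set.Ioo a b, ∀ i j,
      HasDerivAt (fun s => ((Ltil s)ᵀ * (Mdag s)⁻¹ * Ltil s) i j)
        ((-((Btil t)ᵀ * ((Ltil t)ᵀ * (Mdag t)⁻¹ * Ltil t)) -
            ((Ltil t)ᵀ * (Mdag t)⁻¹ * Ltil t) * Btil t +
            ((Ltil t)ᵀ * (Mdag t)⁻¹ * Ltil t) * atil t *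
              ((Ltil t)ᵀ * (Mdag t)⁻¹ * Ltil t)) i j) t :=
  riccati_for_H_general a b Btil atil Ltil hLtil Mdag hMdag hMinv
end

section
/- Let J ⊆ ℝ be an open interval and let B̃ : J → ℝ^{d×d} and ã : J → ℝ^{d×d} be continuous. Suppose L̃ : J → ℝ^{m×d} is differentiable with L̃′(t) = −L̃(t) B̃(t), suppose M̃† : J → ℝ^{m×m} is differentiable with (M̃†)′(t) = −L̃(t) ã(t) L̃(t)ᵀ, and suppose for every t ∈ J both M̃†(t) and H̃(t) := L̃(t)ᵀ M̃†(t)⁻¹ L̃(t) are invertible; write H̃†(t) := H̃(t)⁻¹. Then H̃† is differentiable on J and satisfies the backward ordinary differential equation (H̃†)′(t) = B̃(t) H̃†(t) + H̃†(t) B̃(t)ᵀ − ã(t) for every t ∈ J. -/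
/-!
Entrywise derivatives are derivatives in the product topology on matrices, where the product
rule and `(A⁻¹)' = -A⁻¹ A' A⁻¹` hold. Differentiating `H = Lᵀ M⁻¹ L` gives the Riccati equation
`H' = H a H - Bᵀ H - H B`; conjugating it by `H⁻¹` cancels the quadratic term and leaves the
linear equation `(H⁻¹)' = B H⁻¹ + H⁻¹ Bᵀ - a`.
-/

open Matrix Filter Topology
-- A norm inducing the product topology, so that `HasDerivAt.continuousAt` applies to matrices.
open scoped Matrix.Norms.Elementwise

section MatrixCalculus

variable {l m n : Type*} {t : ℝ}

theorem hasDerivAt_matrix_iff [Fintype n] {A : ℝ → Matrix m n ℝ} {A' : Matrix m n ℝ} :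
    HasDerivAt A A' t ↔ ∀ i j, HasDerivAt (fun s => A s i j) (A' i j) t :=
  hasDerivAt_pi.trans (forall_congr' fun _ => hasDerivAt_pi)

theorem HasDerivAt.matrix_transpose [Fintype m] [Fintype n] {A : ℝ → Matrix m n ℝ}
    {A' : Matrix m n ℝ} (hA : HasDerivAt A A' t) :
    HasDerivAt (fun s => (A s)ᵀ) A'ᵀ t :=
  hasDerivAt_matrix_iff.2 fun i j => hasDerivAt_matrix_iff.1 hA j i

theorem HasDerivAt.matrix_mul [Fintype l] [Fintype n] {A : ℝ → Matrix m n ℝ}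
    {A' : Matrix m n ℝ} {B : ℝ → Matrix n l ℝ} {B' : Matrix n l ℝ}
    (hA : HasDerivAt A A' t) (hB : HasDerivAt B B' t) :
    HasDerivAt (fun s => A s * B s) (A' * B t + A t * B') t := by
  rw [hasDerivAt_matrix_iff] at hA hB ⊢
  intro i k
  simp only [mul_apply, Matrix.add_apply, ← Finset.sum_add_distrib]
  exact HasDerivAt.fun_sum fun j _ => (hA i j).mul (hB j k)

theorem HasDerivAt.matrix_inv [Fintype n] [DecidableEq n] {A : ℝ → Matrix n n ℝ}
    {A' : Matrix n n ℝ} (hA : HasDerivAt A A' t) (hU : IsUnit (A t)) :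
    HasDerivAt (fun s => (A s)⁻¹) (-((A t)⁻¹ * A' * (A t)⁻¹)) t := by
  have hdet : (A t).det ≠ 0 := ((isUnit_iff_isUnit_det _).1 hU).ne_zero
  have hdet_cont : ContinuousAt (fun s => (A s).det) t :=
    (continuous_id.matrix_det.continuousAt).comp hA.continuousAt
  have hinv_cont : ContinuousAt (fun s => (A s)⁻¹) t := by
    refine (continuousAt_matrix_inv _ ?_).comp hA.continuousAt
    simpa only [Ring.inverse_eq_inv'] using continuousAt_inv₀ hdet
  have hslope : ∀ᶠ s in 𝓝[≠] t, slope (fun s => (A s)⁻¹) t s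
      = -((A s)⁻¹ * slope A t s * (A t)⁻¹) := by
    filter_upwards [nhdsWithin_le_nhds (hdet_cont.eventually_ne hdet)] with s hs
    have hUs : IsUnit (A s) ↔ IsUnit (A t) := by
      simp only [isUnit_iff_isUnit_det, isUnit_iff_ne_zero, ne_eq, hs, hdet, not_false_eq_true]
    rw [slope_def_module, slope_def_module, inv_sub_inv hUs, ← neg_sub (A s), Matrix.mul_neg,
      Matrix.neg_mul, smul_neg, Matrix.mul_smul, Matrix.smul_mul]
  refine hasDerivAt_iff_tendsto_slope.2 (Tendsto.congr' (EventuallyEq.symm hslope) ?_)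
  exact (((hinv_cont.tendsto.mono_left nhdsWithin_le_nhds).mul
    (hasDerivAt_iff_tendsto_slope.1 hA)).mul_const _).neg

theorem HasDerivAt.transpose_mul_inv_mul [Fintype m] [DecidableEq m] [Fintype n]
    {L : ℝ → Matrix m n ℝ} {M : ℝ → Matrix m m ℝ} {B a : Matrix n n ℝ}
    (hL : HasDerivAt L (-(L t * B)) t) (hM : HasDerivAt M (-(L t * a * (L t)ᵀ)) t)
    (hMU : IsUnit (M t)) :
    HasDerivAt (fun s => (L s)ᵀ * (M s)⁻¹ * L s)
      ((L t)ᵀ * (M t)⁻¹ * L t * a * ((L t)ᵀ * (M t)⁻¹ * L t) - Bᵀ * ((L t)ᵀ * (M t)⁻¹ * L t)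
        - (L t)ᵀ * (M t)⁻¹ * L t * B) t := by
  convert (hL.matrix_transpose.matrix_mul (hM.matrix_inv hMU)).matrix_mul hL using 1
  simp only [transpose_neg, transpose_mul, Matrix.neg_mul, Matrix.mul_neg, neg_neg,
    Matrix.add_mul, Matrix.mul_assoc]
  abel

end MatrixCalculus

theorem neg_mul_riccati_mul_eq {R : Type*} [Ring R] {H K B C a : R} (hKH : K * H = 1)
    (hHK : H * K = 1) : -(K * (H * a * H - C * H - H * B) * K) = B * K + K * C - a :=
  calc -(K * (H * a * H - C * H - H * B) * K)
      = -((K * H) * a * (H * K)) + K * C * (H * K) + (K * H) * B * K := by noncomm_ring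
    _ = B * K + K * C - a := by rw [hKH, hHK]; noncomm_ring

theorem backward_ode_for_Hdagger_general {d m : ℕ} (a b : ℝ)
    (Btil atil : ℝ → Matrix (Fin d) (Fin d) ℝ)
    (Ltil : ℝ → Matrix (Fin m) (Fin d) ℝ)
    (hLtil : ∀ t ∈ Set.Ioo a b, ∀ i j,
      HasDerivAt (fun s => Ltil s i j) ((-(Ltil t * Btil t)) i j) t)
    (Mdag : ℝ → Matrix (Fin m) (Fin m) ℝ)
    (hMdag : ∀ t ∈ Set.Ioo a b, ∀ i j,
      HasDerivAt (fun s => Mdag s i j) ((-(Ltil t * atil t * (Ltil t)ᵀ)) i j) t)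
    (hMinv : ∀ t ∈ Set.Ioo a b, IsUnit (Mdag t))
    (hHinv : ∀ t ∈ Set.Ioo a b, IsUnit ((Ltil t)ᵀ * (Mdag t)⁻¹ * Ltil t)) :
    ∀ t ∈ Set.Ioo a b, ∀ i j,
      HasDerivAt (fun s => ((Ltil s)ᵀ * (Mdag s)⁻¹ * Ltil s)⁻¹ i j)
        ((Btil t * ((Ltil t)ᵀ * (Mdag t)⁻¹ * Ltil t)⁻¹ +
            ((Ltil t)ᵀ * (Mdag t)⁻¹ * Ltil t)⁻¹ * (Btil t)ᵀ - atil t) i j) t := by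
  intro t ht
  set H := (Ltil t)ᵀ * (Mdag t)⁻¹ * Ltil t
  have hH : HasDerivAt (fun s => (Ltil s)ᵀ * (Mdag s)⁻¹ * Ltil s)
      (H * atil t * H - (Btil t)ᵀ * H - H * Btil t) t :=
    (hasDerivAt_matrix_iff.2 (hLtil t ht)).transpose_mul_inv_mul
      (hasDerivAt_matrix_iff.2 (hMdag t ht)) (hMinv t ht)
  have hHdet : IsUnit H.det := (isUnit_iff_isUnit_det H).1 (hHinv t ht)
  rw [← hasDerivAt_matrix_iff,
    ← neg_mul_riccati_mul_eq (nonsing_inv_mul H hHdet) (mul_nonsing_inv H hHdet)]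
  exact hH.matrix_inv (hHinv t ht)

theorem backward_ode_for_Hdagger {d m : ℕ} (a b : ℝ)
    (Btil atil : ℝ → Matrix (Fin d) (Fin d) ℝ)
    (hB : ContinuousOn Btil (Set.Ioo a b)) (ha : ContinuousOn atil (Set.Ioo a b))
    (Ltil : ℝ → Matrix (Fin m) (Fin d) ℝ)
    (hLtil : ∀ t ∈ Set.Ioo a b, ∀ i j,
      HasDerivAt (fun s => Ltil s i j) ((-(Ltil t * Btil t)) i j) t)
    (Mdag : ℝ → Matrix (Fin m) (Fin m) ℝ)
    (hMdag : ∀ t ∈ Set.Ioo a b, ∀ i j,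
      HasDerivAt (fun s => Mdag s i j) ((-(Ltil t * atil t * (Ltil t)ᵀ)) i j) t)
    (hMinv : ∀ t ∈ Set.Ioo a b, IsUnit (Mdag t))
    (hHinv : ∀ t ∈ Set.Ioo a b, IsUnit ((Ltil t)ᵀ * (Mdag t)⁻¹ * Ltil t)) :
    ∀ t ∈ Set.Ioo a b, ∀ i j,
      HasDerivAt (fun s => ((Ltil s)ᵀ * (Mdag s)⁻¹ * Ltil s)⁻¹ i j)
        ((Btil t * ((Ltil t)ᵀ * (Mdag t)⁻¹ * Ltil t)⁻¹ +
            ((Ltil t)ᵀ * (Mdag t)⁻¹ * Ltil t)⁻¹ * (Btil t)ᵀ - atil t) i j) t :=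
  backward_ode_for_Hdagger_general a b Btil atil Ltil hLtil Mdag hMdag hMinv hHinv
end

section
/- Let L ∈ ℝ^{m×d}, let P ∈ ℝ^{d×d} be symmetric positive semidefinite with L P Lᵀ invertible, and let v ∈ ℝ^m and w ∈ ℝ^d be fixed. For a symmetric positive definite matrix Σ ∈ ℝ^{m×m}, define H†(Σ) := P − P Lᵀ (Σ + L P Lᵀ)⁻¹ L P and ν(Σ) := H†(Σ) (Lᵀ Σ⁻¹ v + w). Then for every sequence (Σ_k) of symmetric positive definite m×m matrices with ‖Σ_k‖ → 0 one has L H†(Σ_k) Lᵀ Σ_k⁻¹ → I_m and L ν(Σ_k) → v. -/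
/-!
With `A = L P Lᵀ` and `K(Σ) = A (Σ + A)⁻¹`, the push-forward of the updated covariance is
`L H†(Σ) = L P - K(Σ) L P`, and `A - K(Σ) A = K(Σ) Σ` because `K(Σ) (Σ + A) = A`; hence
`L H†(Σ) Lᵀ Σ⁻¹ = K(Σ)`. Since `A` is invertible, `K` is continuous at `Σ = 0` with `K(0) = 1`,
so `L H†(Σ_k) Lᵀ Σ_k⁻¹ → 1`, `L H†(Σ_k) → 0`, and `L ν(Σ_k) = K(Σ_k) v + L H†(Σ_k) w → v`.
-/

open Matrix Filter Topology

section Algebra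

variable {m n R : Type*} [Fintype m] [Fintype n] [CommRing R]
  (L : Matrix m n R) (P : Matrix n n R)

theorem Matrix.mul_sub_mul_transpose_mul_mul (X : Matrix m m R) :
    L * (P - P * Lᵀ * X * L * P) = L * P - L * P * Lᵀ * X * (L * P) := by
  simp only [Matrix.mul_sub, Matrix.mul_assoc]

theorem Matrix.mul_sub_mul_add_inv_mul_mul_inv [DecidableEq m] {S : Matrix m m R}
    (hS : IsUnit S.det) (hSA : IsUnit (S + L * P * Lᵀ).det) :
    L * (P - P * Lᵀ * (S + L * P * Lᵀ)⁻¹ * L * P) * Lᵀ * S⁻¹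
      = L * P * Lᵀ * (S + L * P * Lᵀ)⁻¹ := by
  set A := L * P * Lᵀ
  have hKS : A - A * (S + A)⁻¹ * A = A * (S + A)⁻¹ * S := by
    have hK : A * (S + A)⁻¹ * (S + A) = A := nonsing_inv_mul_cancel_right _ _ hSA
    rw [Matrix.mul_add] at hK
    exact sub_eq_iff_eq_add.mpr hK.symm
  calc L * (P - P * Lᵀ * (S + A)⁻¹ * L * P) * Lᵀ * S⁻¹
      = (A - A * (S + A)⁻¹ * A) * S⁻¹ := by
        rw [mul_sub_mul_transpose_mul_mul, Matrix.sub_mul]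
        simp only [A, Matrix.mul_assoc]
    _ = A * (S + A)⁻¹ := by rw [hKS, mul_nonsing_inv_cancel_right _ _ hS]

theorem Matrix.mulVec_mulVec_add [DecidableEq m] (H : Matrix n n R) (S : Matrix m m R)
    (v : m → R) (w : n → R) :
    L *ᵥ (H *ᵥ (Lᵀ *ᵥ S⁻¹ *ᵥ v + w)) = (L * H * Lᵀ * S⁻¹) *ᵥ v + (L * H) *ᵥ w := by
  simp only [mulVec_mulVec, mulVec_add, Matrix.mul_assoc]

end Algebra

section Limits

variable {ι l m n K : Type*} [Fintype m] [NormedField K] {F : Filter ι}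

theorem Filter.Tendsto.matrix_mul_const {M : ι → Matrix l m K} {M₀ : Matrix l m K}
    (h : Tendsto M F (𝓝 M₀)) (N : Matrix m n K) :
    Tendsto (fun k => M k * N) F (𝓝 (M₀ * N)) :=
  ((continuous_id.matrix_mul continuous_const).tendsto M₀).comp h

theorem Filter.Tendsto.matrix_mulVec_const {M : ι → Matrix l m K} {M₀ : Matrix l m K}
    (h : Tendsto M F (𝓝 M₀)) (v : m → K) :
    Tendsto (fun k => M k *ᵥ v) F (𝓝 (M₀ *ᵥ v)) :=
  ((continuous_id.matrix_mulVec continuous_const).tendsto M₀).comp h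

variable [DecidableEq m] {S : ι → Matrix m m K} {A : Matrix m m K}

theorem Filter.Tendsto.eventually_isUnit_det_add_const (hS : Tendsto S F (𝓝 0))
    (hA : IsUnit A.det) : ∀ᶠ k in F, IsUnit (S k + A).det := by
  have hdet : Tendsto (fun k => (S k + A).det) F (𝓝 A.det) := by
    simpa [Function.comp_def] using
      ((continuous_id.add continuous_const).matrix_det.tendsto 0).comp hS
  exact (hdet.eventually_ne hA.ne_zero).mono fun _ => Ne.isUnit

theorem Filter.Tendsto.matrix_mul_inv_add_const (hS : Tendsto S F (𝓝 0))
    (hA : IsUnit A.det) : Tendsto (fun k => A * (S k + A)⁻¹) F (𝓝 1) := by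
  have hinv : ContinuousAt Inv.inv A := by
    refine continuousAt_matrix_inv A ?_
    rw [Ring.inverse_eq_inv']
    exact continuousAt_inv₀ hA.ne_zero
  have hSA : Tendsto (fun k => S k + A) F (𝓝 A) := by
    simpa using hS.add_const A
  simpa [mul_nonsing_inv _ hA] using (hinv.tendsto.comp hSA).const_mul A

end Limits

theorem small_noise_limit_general {d m : ℕ}
    (L : Matrix (Fin m) (Fin d) ℝ)
    (P : Matrix (Fin d) (Fin d) ℝ)
    (hLPL : IsUnit (L * P * Lᵀ))
    (v : Fin m → ℝ) (w : Fin d → ℝ)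
    (Sig : ℕ → Matrix (Fin m) (Fin m) ℝ)
    (hSig : ∀ k, (Sig k).PosDef)
    (hlim : Tendsto Sig atTop (nhds 0)) :
    Tendsto (fun k =>
        L * (P - P * Lᵀ * (Sig k + L * P * Lᵀ)⁻¹ * L * P) * Lᵀ * (Sig k)⁻¹)
      atTop (nhds 1) ∧
    Tendsto (fun k =>
        L *ᵥ ((P - P * Lᵀ * (Sig k + L * P * Lᵀ)⁻¹ * L * P) *ᵥ
          (Lᵀ *ᵥ (Sig k)⁻¹ *ᵥ v + w)))
      atTop (nhds v) := by
  have hA : IsUnit (L * P * Lᵀ).det := (isUnit_iff_isUnit_det _).mp hLPL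
  have hgain := hlim.matrix_mul_inv_add_const hA
  have hfirst : Tendsto (fun k =>
      L * (P - P * Lᵀ * (Sig k + L * P * Lᵀ)⁻¹ * L * P) * Lᵀ * (Sig k)⁻¹) atTop (𝓝 1) :=
    hgain.congr' <| (hlim.eventually_isUnit_det_add_const hA).mono fun k hSA =>
      (mul_sub_mul_add_inv_mul_mul_inv L P
        ((isUnit_iff_isUnit_det _).mp (hSig k).isUnit) hSA).symm
  have hLH : Tendsto (fun k => L * (P - P * Lᵀ * (Sig k + L * P * Lᵀ)⁻¹ * L * P))
      atTop (𝓝 0) := by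
    simp_rw [mul_sub_mul_transpose_mul_mul]
    simpa using (tendsto_const_nhds (x := L * P)).sub (hgain.matrix_mul_const (L * P))
  refine ⟨hfirst, ?_⟩
  simp_rw [mulVec_mulVec_add]
  simpa using (hfirst.matrix_mulVec_const v).add (hLH.matrix_mulVec_const w)

theorem small_noise_limit {d m : ℕ}
    (L : Matrix (Fin m) (Fin d) ℝ)
    (P : Matrix (Fin d) (Fin d) ℝ) (hP : P.PosSemidef)
    (hLPL : IsUnit (L * P * Lᵀ))
    (v : Fin m → ℝ) (w : Fin d → ℝ)
    (Sig : ℕ → Matrix (Fin m) (Fin m) ℝ)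
    (hSig : ∀ k, (Sig k).PosDef)
    (hlim : Tendsto Sig atTop (nhds 0)) :
    Tendsto (fun k =>
        L * (P - P * Lᵀ * (Sig k + L * P * Lᵀ)⁻¹ * L * P) * Lᵀ * (Sig k)⁻¹)
      atTop (nhds 1) ∧
    Tendsto (fun k =>
        L *ᵥ ((P - P * Lᵀ * (Sig k + L * P * Lᵀ)⁻¹ * L * P) *ᵥ
          (Lᵀ *ᵥ (Sig k)⁻¹ *ᵥ v + w)))
      atTop (nhds v) :=
  small_noise_limit_general L P hLPL v w Sig hSig hlim
end
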